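/- arXiv:1309.0686 — 2 statements merged into one kernel-verified Lean document; each statement's English description precedes it below -/
import Mathlib

section
/- Let S be a set of elements of the free group F on countably many generators, and for a group G let W_S(G) denote the verbal subgroup of G determined by S. Let p : E → G be a surjective group homomorphism with kernel K, and suppose the extension 1 → K → E → G → 1 is W_S-flat, i.e., the image of W_S(K) under the inclusion K → E equals K ∩ W_S(E). Then for every group homomorphism f : X → G, the pullback extension is also W_S-flat: letting P = {(e,x) ∈ E × X : p(e) = f(x)} with projection π : P → X (which is surjective with kernel K' = {(k,1) : k ∈ K}), the image of W_S(K') under the inclusion K' → P equals K' ∩ W_S(P). In other words, the localization functor associated to any variety of groups is conditionally flat. -/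
/-- The verbal subgroup of `G` determined by a set `S` of words in the free group on
countably many generators: the subgroup generated by all images of elements of `S`
under all homomorphisms `FreeGroup ℕ →* G`. -/
def verbalSubgroup (S : Set (FreeGroup ℕ)) (G : Type*) [Group G] : Subgroup G :=
  Subgroup.closure {g : G | ∃ φ : FreeGroup ℕ →* G, ∃ s ∈ S, φ s = g}

/-- The pullback (fiber product) of two homomorphisms `p : E →* G` and `f : X →* G`,
as a subgroup of `E × X`. -/
def pullbackSubgroup {E X G : Type*} [Group E] [Group X] [Group G]
    (p : E →* G) (f : X →* G) : Subgroup (E × X) where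
  carrier := {q : E × X | p q.1 = f q.2}
  one_mem' := by simp
  mul_mem' := by
    intro a b ha hb
    simp only [Set.mem_setOf_eq, Prod.fst_mul, Prod.snd_mul, map_mul] at *
    rw [ha, hb]
  inv_mem' := by
    intro a ha
    simp only [Set.mem_setOf_eq, Prod.fst_inv, Prod.snd_inv, map_inv] at *
    rw [ha]

/-- The projection from the pullback of `p : E →* G` along `f : X →* G` to `X`. -/
def pullbackProj {E X G : Type*} [Group E] [Group X] [Group G]
    (p : E →* G) (f : X →* G) : ↥(pullbackSubgroup p f) →* X :=
  (MonoidHom.snd E X).comp (pullbackSubgroup p f).subtype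

theorem verbal_map_le (S : Set (FreeGroup ℕ)) {A B : Type*} [Group A] [Group B]
    (ψ : A →* B) : (verbalSubgroup S A).map ψ ≤ verbalSubgroup S B := by
  rw [verbalSubgroup, MonoidHom.map_closure]
  apply Subgroup.closure_mono
  rintro _ ⟨g, ⟨φ, s, hs, rfl⟩, rfl⟩
  exact ⟨ψ.comp φ, s, hs, rfl⟩

/-- If a group extension `1 → K → E → G → 1` is `W_S`-flat, i.e. the image of `W_S(K)`
in `E` equals `K ⊓ W_S(E)`, then the pullback extension along any homomorphism
`f : X →* G` is again `W_S`-flat: the localization functor associated to any variety of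
groups is conditionally flat. -/
theorem verbal_conditionally_flat (S : Set (FreeGroup ℕ))
    {E G X : Type*} [Group E] [Group G] [Group X]
    (p : E →* G) (hp : Function.Surjective p)
    (hflat : (verbalSubgroup S ↥(MonoidHom.ker p)).map (MonoidHom.ker p).subtype =
      MonoidHom.ker p ⊓ verbalSubgroup S E)
    (f : X →* G) :
    (verbalSubgroup S ↥(MonoidHom.ker (pullbackProj p f))).map
        (MonoidHom.ker (pullbackProj p f)).subtype =
      MonoidHom.ker (pullbackProj p f) ⊓ verbalSubgroup S ↥(pullbackSubgroup p f) := by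
  set K := MonoidHom.ker p
  set P := pullbackSubgroup p f
  set π := pullbackProj p f
  -- the homomorphism K →* P, k ↦ (k, 1)
  have hjmem : ∀ k : ↥K, ((k : E), (1 : X)) ∈ P := by
    intro k
    have hk : p (k : E) = 1 := k.2
    simp [P, pullbackSubgroup, hk]
  let j : ↥K →* ↥P :=
    { toFun := fun k => ⟨((k : E), 1), hjmem k⟩
      map_one' := by ext <;> simp
      map_mul' := by intro a b; ext <;> simp }
  have hjker : ∀ k : ↥K, j k ∈ MonoidHom.ker π := by
    intro k
    simp [MonoidHom.mem_ker, π, pullbackProj, j]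
  let ι : ↥K →* ↥(MonoidHom.ker π) := j.codRestrict _ hjker
  apply le_antisymm
  · apply le_inf
    · exact Subgroup.map_subtype_le _
    · exact verbal_map_le S _
  · rintro q ⟨hker, hW⟩
    have hx : (q : E × X).2 = 1 := hker
    set e := (q : E × X).1 with he
    have hpr : e ∈ K ⊓ verbalSubgroup S E := by
      constructor
      · have hq : p e = f (q : E × X).2 := q.2
        rw [hx, map_one] at hq
        exact hq
      · exact verbal_map_le S ((MonoidHom.fst E X).comp P.subtype) ⟨q, hW, rfl⟩
    rw [← hflat] at hpr
    obtain ⟨k, hk, hke⟩ := hpr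
    refine ⟨ι k, verbal_map_le S ι ⟨k, hk, rfl⟩, ?_⟩
    ext
    · exact hke
    · exact hx.symm
end

section
/- Let p : E → Q be a surjective group homomorphism with kernel K and let c be a natural number. Suppose the extension 1 → K → E → Q → 1 is flat for the lower central series quotient at stage c, i.e., the image of the lower central series subgroup Γ_c(K) under the inclusion K → E equals K ∩ Γ_c(E). Then for every group homomorphism f : X → Q, the pullback extension has the same property: letting P = {(e,x) ∈ E × X : p(e) = f(x)} with projection π : P → X (which is surjective with kernel K' = {(k,1) : k ∈ K}), the image of Γ_c(K') under the inclusion K' → P equals K' ∩ Γ_c(P). In other words, the functor sending a group G to its nilpotent quotient G/Γ_c(G) is conditionally flat. -/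
/-!
`Γ_c`-flatness of `N ≤ G` (that `Γ_c(N) = N ⊓ Γ_c(G)`) descends along any homomorphism
`g : G →* H` that is injective on `N`: an element of `N ⊓ Γ_c(G)` is sent into
`g(N) ⊓ Γ_c(H) = Γ_c(g(N)) = g(Γ_c(N))`, and injectivity on `N` pulls it back into `Γ_c(N)`.
The first projection of the pullback is injective on `K' = ker π` and maps it onto `K = ker p`.
-/

namespace Subgroup

theorem lowerCentralSeries_eq_inf_of_injOn {G H : Type*} [Group G] [Group H] (g : G →* H)
    {N : Subgroup G} (hg : Set.InjOn g N) (c : ℕ)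
    (hflat : (N.map g).lowerCentralSeries c = N.map g ⊓ lowerCentralSeries ⊤ c) :
    N.lowerCentralSeries c = N ⊓ lowerCentralSeries ⊤ c := by
  refine le_antisymm
    (le_inf (lowerCentralSeries_antitone N (Nat.zero_le c)) (lowerCentralSeries_mono c le_top)) ?_
  rintro q ⟨hqN, hqc⟩
  have hmap : (lowerCentralSeries ⊤ c).map g ≤ lowerCentralSeries ⊤ c :=
    (map_lowerCentralSeries ⊤ g c).trans_le (lowerCentralSeries_mono c le_top)
  have hgq : g q ∈ (N.lowerCentralSeries c).map g := by
    rw [map_lowerCentralSeries, hflat]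
    exact ⟨mem_map_of_mem g hqN, hmap (mem_map_of_mem g hqc)⟩
  obtain ⟨n, hn, hnq⟩ := hgq
  rwa [← hg (lowerCentralSeries_antitone N (Nat.zero_le c) hn) hqN hnq]

end Subgroup

section Pullback

variable {E Q X : Type*} [Group E] [Group Q] [Group X] (p : E →* Q) (f : X →* Q)

theorem mem_ker_pullbackProj_iff (q : pullbackSubgroup p f) :
    q ∈ MonoidHom.ker (pullbackProj p f) ↔ q.1.2 = 1 :=
  Iff.rfl

theorem injOn_fst_ker_pullbackProj :
    Set.InjOn ((MonoidHom.fst E X).comp (pullbackSubgroup p f).subtype)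
      (MonoidHom.ker (pullbackProj p f)) := by
  intro q hq r hr hqr
  exact Subtype.ext (Prod.ext hqr (hq.trans hr.symm))

theorem map_fst_ker_pullbackProj :
    (MonoidHom.ker (pullbackProj p f)).map
        ((MonoidHom.fst E X).comp (pullbackSubgroup p f).subtype) = MonoidHom.ker p := by
  ext e
  constructor
  · rintro ⟨q, hq, rfl⟩
    have hpq : p q.1.1 = f q.1.2 := q.2
    rw [(mem_ker_pullbackProj_iff p f q).mp hq, map_one] at hpq
    exact hpq
  · intro he
    have hmem : (e, (1 : X)) ∈ pullbackSubgroup p f :=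
      show p e = f 1 by rw [map_one]; exact he
    exact ⟨⟨(e, 1), hmem⟩, rfl, rfl⟩

end Pullback

theorem lowerCentralSeries_conditionally_flat_general (c : ℕ)
    {E Q X : Type*} [Group E] [Group Q] [Group X]
    (p : E →* Q)
    (hflat : ((⊤ : Subgroup ↥(MonoidHom.ker p)).lowerCentralSeries c).map (MonoidHom.ker p).subtype =
      MonoidHom.ker p ⊓ (⊤ : Subgroup E).lowerCentralSeries c)
    (f : X →* Q) :
    ((⊤ : Subgroup ↥(MonoidHom.ker (pullbackProj p f))).lowerCentralSeries c).map
        (MonoidHom.ker (pullbackProj p f)).subtype =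
      MonoidHom.ker (pullbackProj p f) ⊓ (⊤ : Subgroup ↥(pullbackSubgroup p f)).lowerCentralSeries c := by
  rw [Subgroup.top_subtype_lowerCentralSeries] at hflat ⊢
  refine Subgroup.lowerCentralSeries_eq_inf_of_injOn _ (injOn_fst_ker_pullbackProj p f) c ?_
  rwa [map_fst_ker_pullbackProj]

/-- If a group extension `1 → K → E → Q → 1` is `Γ_c`-flat, i.e. the image of `Γ_c(K)`
in `E` equals `K ⊓ Γ_c(E)`, then the pullback extension along any homomorphism
`f : X →* Q` is again `Γ_c`-flat: the functor `G ↦ G/Γ_c(G)` is conditionally flat. -/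
theorem lowerCentralSeries_conditionally_flat (c : ℕ)
    {E Q X : Type*} [Group E] [Group Q] [Group X]
    (p : E →* Q) (hp : Function.Surjective p)
    (hflat : ((⊤ : Subgroup ↥(MonoidHom.ker p)).lowerCentralSeries c).map (MonoidHom.ker p).subtype =
      MonoidHom.ker p ⊓ (⊤ : Subgroup E).lowerCentralSeries c)
    (f : X →* Q) :
    ((⊤ : Subgroup ↥(MonoidHom.ker (pullbackProj p f))).lowerCentralSeries c).map
        (MonoidHom.ker (pullbackProj p f)).subtype =
      MonoidHom.ker (pullbackProj p f) ⊓ (⊤ : Subgroup ↥(pullbackSubgroup p f)).lowerCentralSeries c :=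
  lowerCentralSeries_conditionally_flat_general c p hflat f
end
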